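/- Let e be a transitive relation on a set E, let (a,b,U), (c,d,V) ∈ F(e) with a ≠ b and c ≠ d, and set p = ⟨a,b,U⟩, q = ⟨c,d,V⟩, Uᶜ = [a,b] \ U, Vᶜ = [c,d] \ V. Then p ∩ q ≠ ∅ and p ∩ q₋ = ∅ if and only if [c,d] ⊆ [a,b] and ∅ ≠ e ∩ ((Uᶜ ∩ Vᶜ) × (U ∩ V)) ⊆ [c] × [d], where [c] = {x | x ≡ c} and [d] = {x | x ≡ d}. (This characterizes the arrow relation p ↗ q⊥ between completely join-irreducible and completely meet-irreducible elements of Reg(e).) -/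

import Mathlib

/-! When `a ≠ b` and `c ≠ d` the sets `p` and `q` are rectangles `e ∩ (Uᶜ × U)` and
`e ∩ (Vᶜ × V)`, so `p ∩ q` is the rectangle `e ∩ ((Uᶜ ∩ Vᶜ) × (U ∩ V))`, and `p ∩ q₋ = ∅`
says exactly that this rectangle lies in `[c] × [d]`. A pair `(x, y)` in it then gives
`a ⊴ x ⊴ c` and `d ⊴ y ⊴ b`, whence `[c,d] ⊆ [a,b]`. -/

/-- A binary relation (as a set of pairs) is transitive. -/
def TransRel {E : Type*} (a : Set (E × E)) : Prop :=
  ∀ x y z : E, (x, y) ∈ a → (y, z) ∈ a → (x, z) ∈ a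

/-- The transitive closure of a set of pairs. -/
def tcl {E : Type*} (a : Set (E × E)) : Set (E × E) :=
  {p | Relation.TransGen (fun u v => (u, v) ∈ a) p.1 p.2}

/-- The interior of `a` relative to `e`. -/
def tint {E : Type*} (e a : Set (E × E)) : Set (E × E) :=
  e \ tcl (e \ a)

/-- `a` is a closed subset of `e`. -/
def IsClosedIn {E : Type*} (e a : Set (E × E)) : Prop :=
  a ⊆ e ∧ TransRel a

/-- `a` is an open subset of `e`. -/
def IsOpenIn {E : Type*} (e a : Set (E × E)) : Prop :=
  a ⊆ e ∧ TransRel (e \ a)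

/-- `a` is a clopen subset of `e`. -/
def IsClopenIn {E : Type*} (e a : Set (E × E)) : Prop :=
  a ⊆ e ∧ TransRel a ∧ TransRel (e \ a)

/-- `a` is a regular closed subset of `e`. -/
def RegClosed {E : Type*} (e a : Set (E × E)) : Prop :=
  a ⊆ e ∧ a = tcl (tint e a)

/-- The reflexive preordering `x ⊴ y` associated with `e`. -/
def rle {E : Type*} (e : Set (E × E)) (x y : E) : Prop :=
  (x, y) ∈ e ∨ x = y

/-- `x ≡ y`: `x ⊴ y` and `y ⊴ x`. -/
def eqv {E : Type*} (e : Set (E × E)) (x y : E) : Prop :=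
  rle e x y ∧ rle e y x

/-- `e` is square-free. -/
def SqFree {E : Type*} (e : Set (E × E)) : Prop :=
  ∀ a b x y : E, (a, b) ∈ e → rle e a x → rle e x b → rle e a y → rle e y b →
    rle e x y ∨ rle e y x

/-- The interval `[a,b] = {x | a ⊴ x ⊴ b}`. -/
def cce {E : Type*} (e : Set (E × E)) (a b : E) : Set E :=
  {x | rle e a x ∧ rle e x b}

/-- `(a,b,U) ∈ F(e)`. -/
def Ftriple {E : Type*} (e : Set (E × E)) (a b : E) (U : Set E) : Prop :=
  (a, b) ∈ e ∧ U ⊆ cce e a b ∧ (a ≠ b → a ∉ U ∧ b ∈ U)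

/-- The clopen set `⟨a,b,U⟩ = e ∩ (({a} ∪ Uᶜ) × ({b} ∪ U))`. -/
def pji {E : Type*} (e : Set (E × E)) (a b : E) (U : Set E) : Set (E × E) :=
  e ∩ ((({a} : Set E) ∪ (cce e a b \ U)) ×ˢ (({b} : Set E) ∪ U))

/-- The set `p₋` associated with `p = ⟨a,b,U⟩`: if `a ≠ b` it is
`p \ ([a] × [b])`, and if `a = b` it is `p \ {(a,a)}`. -/
def pminus {E : Type*} (e : Set (E × E)) (a b : E) (U : Set E) : Set (E × E) :=
  {z ∈ pji e a b U | ¬ ((a ≠ b ∧ eqv e z.1 a ∧ eqv e z.2 b) ∨ (a = b ∧ z = (a, a)))}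

section

variable {E : Type*} {e : Set (E × E)}

theorem rle_trans (he : TransRel e) {x y z : E} : rle e x y → rle e y z → rle e x z := by
  rintro (hxy | rfl) (hyz | rfl)
  · exact Or.inl (he _ _ _ hxy hyz)
  · exact Or.inl hxy
  · exact Or.inl hyz
  · exact Or.inr rfl

theorem cce_subset_cce (he : TransRel e) {a b c d : E} (hac : rle e a c) (hdb : rle e d b) :
    cce e c d ⊆ cce e a b :=
  fun _ hw => ⟨rle_trans he hac hw.1, rle_trans he hw.2 hdb⟩

theorem Ftriple.pji_eq {a b : E} {U : Set E} (hp : Ftriple e a b U) (hab : a ≠ b) :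
    pji e a b U = e ∩ ((cce e a b \ U) ×ˢ U) := by
  obtain ⟨hab_e, -, hU⟩ := hp
  obtain ⟨haU, hbU⟩ := hU hab
  have ha : a ∈ cce e a b \ U := ⟨⟨Or.inr rfl, Or.inl hab_e⟩, haU⟩
  rw [pji, Set.singleton_union, Set.insert_eq_of_mem ha, Set.singleton_union,
    Set.insert_eq_of_mem hbU]

theorem pji_inter_pji {a b c d : E} {U V : Set E} (hp : Ftriple e a b U) (hab : a ≠ b)
    (hq : Ftriple e c d V) (hcd : c ≠ d) :
    pji e a b U ∩ pji e c d V = e ∩ (((cce e a b \ U) ∩ (cce e c d \ V)) ×ˢ (U ∩ V)) := by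
  rw [hp.pji_eq hab, hq.pji_eq hcd, ← Set.inter_inter_distrib_left, Set.prod_inter_prod]

theorem pminus_eq_diff {c d : E} (V : Set E) (hcd : c ≠ d) :
    pminus e c d V = pji e c d V \ {x | eqv e x c} ×ˢ {y | eqv e y d} := by
  ext ⟨x, y⟩
  simp [pminus, hcd]

end

/-- arrow relation `p ↗ q⊥` for bipartite `p` and `q` (cases `a ≠ b`,
`c ≠ d`). -/
theorem arrow_bipartite_bipartite {E : Type*} (e : Set (E × E)) (he : TransRel e)
    (a b c d : E) (U V : Set E) (hp : Ftriple e a b U) (hq : Ftriple e c d V)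
    (hab : a ≠ b) (hcd : c ≠ d) :
    ((pji e a b U ∩ pji e c d V).Nonempty ∧ pji e a b U ∩ pminus e c d V = ∅) ↔
      (cce e c d ⊆ cce e a b ∧
        (e ∩ (((cce e a b \ U) ∩ (cce e c d \ V)) ×ˢ (U ∩ V))).Nonempty ∧
        e ∩ (((cce e a b \ U) ∩ (cce e c d \ V)) ×ˢ (U ∩ V)) ⊆
          {x | eqv e x c} ×ˢ {y | eqv e y d}) := by
  rw [pminus_eq_diff V hcd, ← Set.inter_sdiff_assoc, pji_inter_pji hp hab hq hcd,
    Set.sdiff_eq_empty]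
  refine ⟨fun ⟨hne, hsub⟩ => ⟨?_, hne, hsub⟩, fun h => h.2⟩
  obtain ⟨⟨x, y⟩, hxy⟩ := hne
  obtain ⟨⟨hxc, -⟩, ⟨-, hdy⟩⟩ := hsub hxy
  have hax : rle e a x := hxy.2.1.1.1.1
  have hyb : rle e y b := (hp.2.1 hxy.2.2.1).2
  exact cce_subset_cce he (rle_trans he hax hxc) (rle_trans he hdy hyb)
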